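/- arXiv:1306.6386 — 3 statements merged into one kernel-verified Lean document; each statement's English description precedes it below -/
import Mathlib

section
/- For dimension d=2, c>0, and n≥1, there exists a constant C such that for all x∈ℝ², ∫_{|x−y|<c/√n} |log|y|| dy ≤ C·( 1/n + |log|x||/n + (log n)/n · 1_{|x|<2c/√n} ). -/
/-!
Write `r = c / √n`. If `‖x‖ ≥ 2r`, every `y` in the ball satisfies `‖x‖/2 ≤ ‖y‖ ≤ 2‖x‖`, so
`|log ‖y‖| ≤ |log ‖x‖| + log 2` on a ball of area `π c² / n`. If `‖x‖ < 2r`, the ball lies in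
`B(0, 3r)`, and polar coordinates give `∫_{B(0,R)} |log ‖y‖| = 2π ∫₀^R t |log t| dt ≤ 2π R² (|log R| + 1)`;
for `R = 3r` the logarithm `|log (3r)| ≤ |log (3c)| + (log n)/2` produces the `log n / n` term.
-/

open MeasureTheory Real Set Metric

section PolarCoordinates

variable {E F : Type*} [NormedAddCommGroup E] [NormedSpace ℝ E] [FiniteDimensional ℝ E]
  [MeasurableSpace E] [BorelSpace E] [Nontrivial E] [NormedAddCommGroup F] [NormedSpace ℝ F]
  (μ : Measure E) [μ.IsAddHaarMeasure]

theorem setIntegral_ball_fun_norm_addHaar (f : ℝ → F) (r : ℝ) :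
    ∫ x in ball (0 : E) r, f ‖x‖ ∂μ = Module.finrank ℝ E • μ.real (ball 0 1) •
      ∫ y in Ioo 0 r, y ^ (Module.finrank ℝ E - 1) • f y := by
  have hball : (ball (0 : E) r).indicator (fun x ↦ f ‖x‖) = fun x ↦ (Iio r).indicator f ‖x‖ := by
    ext x; by_cases h : ‖x‖ < r <;> simp [indicator, h]
  rw [← integral_indicator measurableSet_ball, hball, integral_fun_norm_addHaar μ,
    ← indicator_smul, setIntegral_indicator measurableSet_Iio, Ioi_inter_Iio]

end PolarCoordinates

theorem mul_abs_log_le_of_le {y R : ℝ} (hy : 0 < y) (hyR : y ≤ R) :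
    y * |log y| ≤ R * (|log R| + 1) := by
  have hR : 0 < R := hy.trans_le hyR
  -- rescale to `t = y / R ∈ (0, 1]`, where `|t log t| < 1`
  have ht : |log (y / R) * (y / R)| < 1 :=
    abs_log_mul_self_lt _ (by positivity) (div_le_one_of_le₀ hyR hR.le)
  have hsplit : y * log y = y * log R + R * (log (y / R) * (y / R)) := by
    rw [log_div hy.ne' hR.ne']; field_simp; ring
  calc y * |log y| = |y * log R + R * (log (y / R) * (y / R))| := by
        rw [← hsplit, abs_mul, abs_of_pos hy]
    _ ≤ y * |log R| + R * 1 := by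
        grw [abs_add_le, abs_mul, abs_mul, abs_of_pos hy, abs_of_pos hR, ht]
    _ ≤ R * (|log R| + 1) := by nlinarith [abs_nonneg (log R)]

theorem setIntegral_Ioo_mul_abs_log_le {R : ℝ} (hR : 0 ≤ R) :
    ∫ y in Ioo 0 R, y * |log y| ≤ R ^ 2 * (|log R| + 1) := by
  have hbound : ∀ y ∈ Ioo 0 R, ‖y * |log y|‖ ≤ R * (|log R| + 1) := fun y hy ↦ by
    rw [norm_of_nonneg (by positivity [hy.1])]
    exact mul_abs_log_le_of_le hy.1 hy.2.le
  calc ∫ y in Ioo 0 R, y * |log y| ≤ ‖∫ y in Ioo 0 R, y * |log y|‖ := le_norm_self _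
    _ ≤ R * (|log R| + 1) * volume.real (Ioo 0 R) :=
        norm_setIntegral_le_of_norm_le_const measure_Ioo_lt_top hbound
    _ = R ^ 2 * (|log R| + 1) := by rw [Real.volume_real_Ioo_of_le hR]; ring

local notation "E2" => EuclideanSpace ℝ (Fin 2)

theorem volume_real_ball_fin_two (x : E2) {r : ℝ} (hr : 0 ≤ r) :
    volume.real (ball x r) = π * r ^ 2 := by
  simp [measureReal_def, ENNReal.toReal_ofReal hr, ENNReal.toReal_ofReal pi_pos.le, mul_comm]

theorem integrableOn_ball_zero_abs_log_norm (R : ℝ) :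
    IntegrableOn (fun y : E2 ↦ |log ‖y‖|) (ball 0 R) := by
  rw [integrableOn_fun_norm_addHaar volume (f := fun t ↦ |log t|)]
  refine Measure.integrableOn_of_bounded measure_Ioo_lt_top.ne (by fun_prop)
    (M := R * (|log R| + 1)) ((ae_restrict_iff' measurableSet_Ioo).mpr (.of_forall fun y hy ↦ ?_))
  simp only [finrank_euclideanSpace_fin, Nat.reduceSub, pow_one, smul_eq_mul]
  rw [norm_of_nonneg (by positivity [hy.1])]
  exact mul_abs_log_le_of_le hy.1 hy.2.le

theorem setIntegral_ball_zero_abs_log_norm_le {R : ℝ} (hR : 0 ≤ R) :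
    ∫ y in ball (0 : E2) R, |log ‖y‖| ≤ 2 * π * R ^ 2 * (|log R| + 1) := by
  rw [setIntegral_ball_fun_norm_addHaar volume (fun t ↦ |log t|),
    volume_real_ball_fin_two 0 zero_le_one]
  simp only [finrank_euclideanSpace_fin, Nat.reduceSub, pow_one, smul_eq_mul, one_pow, mul_one,
    nsmul_eq_mul, Nat.cast_ofNat]
  calc _ ≤ 2 * (π * (R ^ 2 * (|log R| + 1))) := by grw [setIntegral_Ioo_mul_abs_log_le hR]
    _ = _ := by ring

theorem abs_log_norm_le_of_dist_lt {E : Type*} [SeminormedAddCommGroup E] {x y : E}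
    (h : dist y x < ‖x‖ / 2) : |log ‖y‖| ≤ |log ‖x‖| + log 2 := by
  have hlower : ‖x‖ / 2 ≤ ‖y‖ := by
    have := norm_sub_norm_le x y
    rw [← dist_eq_norm, dist_comm] at this
    linarith
  have hupper : ‖y‖ ≤ 2 * ‖x‖ := by
    have := norm_le_norm_add_norm_sub' y x
    rw [← dist_eq_norm] at this
    linarith
  have hx : 0 < ‖x‖ := by linarith [dist_nonneg (x := y) (y := x)]
  have hy : 0 < ‖y‖ := by linarith
  have hup : log ‖y‖ ≤ log 2 + log ‖x‖ := by
    rw [← log_mul two_ne_zero hx.ne']; exact log_le_log hy hupper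
  have hlo : log ‖x‖ - log 2 ≤ log ‖y‖ := by
    rw [← log_div hx.ne' two_ne_zero]; exact log_le_log (by positivity) hlower
  rw [abs_le]
  constructor <;> linarith [neg_abs_le (log ‖x‖), le_abs_self (log ‖x‖)]

theorem setIntegral_ball_abs_log_norm_le_of_norm_lt {x : E2} {r : ℝ} (hx : ‖x‖ < 2 * r) :
    ∫ y in ball x r, |log ‖y‖| ≤ 18 * π * r ^ 2 * (|log (3 * r)| + 1) := by
  have hr : 0 < r := by linarith [norm_nonneg x]
  have hsub : ball x r ⊆ ball 0 (3 * r) := ball_subset_ball' (by rw [dist_zero_right]; linarith)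
  calc ∫ y in ball x r, |log ‖y‖| ≤ ∫ y in ball 0 (3 * r), |log ‖y‖| :=
        setIntegral_mono_set (integrableOn_ball_zero_abs_log_norm _)
          (.of_forall fun _ ↦ abs_nonneg _) hsub.eventuallyLE
    _ ≤ 2 * π * (3 * r) ^ 2 * (|log (3 * r)| + 1) :=
        setIntegral_ball_zero_abs_log_norm_le (by positivity)
    _ = 18 * π * r ^ 2 * (|log (3 * r)| + 1) := by ring

theorem setIntegral_ball_abs_log_norm_le_of_le_norm {x : E2} {r : ℝ} (hr : 0 ≤ r)
    (hx : 2 * r ≤ ‖x‖) :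
    ∫ y in ball x r, |log ‖y‖| ≤ π * r ^ 2 * (|log ‖x‖| + log 2) := by
  have hbound : ∀ y ∈ ball x r, ‖|log ‖y‖|‖ ≤ |log ‖x‖| + log 2 := fun y hy ↦ by
    rw [norm_abs_eq_norm, norm_eq_abs]
    exact abs_log_norm_le_of_dist_lt (by rw [mem_ball] at hy; linarith)
  calc ∫ y in ball x r, |log ‖y‖| ≤ ‖∫ y in ball x r, |log ‖y‖|‖ := le_norm_self _
    _ ≤ (|log ‖x‖| + log 2) * volume.real (ball x r) :=
        norm_setIntegral_le_of_norm_le_const measure_ball_lt_top hbound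
    _ = π * r ^ 2 * (|log ‖x‖| + log 2) := by rw [volume_real_ball_fin_two x hr]; ring

/-- For `d = 2`, `c > 0`, `n ≥ 1`:
`∫_{|x-y| < c/√n} |log|y|| dy ≤ C (1/n + |log|x||/n + (log n)/n · 1_{|x| < 2c/√n})`. -/
theorem stmt2 (c : ℝ) (hc : 0 < c) :
    ∃ C : ℝ, 0 < C ∧ ∀ n : ℝ, 1 ≤ n → ∀ x : EuclideanSpace ℝ (Fin 2),
      (∫ y in Metric.ball x (c / Real.sqrt n), |Real.log ‖y‖|)
        ≤ C * (1 / n + |Real.log ‖x‖| / n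
            + (if ‖x‖ < 2 * c / Real.sqrt n then Real.log n / n else 0)) := by
  set A := |log (3 * c)| + 1
  have hA : 1 ≤ A := le_add_of_nonneg_left (abs_nonneg _)
  refine ⟨18 * π * c ^ 2 * A, by positivity, fun n hn x ↦ ?_⟩
  have hn0 : 0 < n := by linarith
  have hlogn : 0 ≤ log n := log_nonneg hn
  have hL : 0 ≤ |log ‖x‖| := abs_nonneg _
  have hr2 : (c / √n) ^ 2 = c ^ 2 / n := by rw [div_pow, sq_sqrt hn0.le]
  rw [mul_div_assoc (2 : ℝ)]
  split_ifs with hx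
  · have hlog : |log (3 * (c / √n))| ≤ |log (3 * c)| + log n / 2 := by
      rw [← mul_div_assoc, log_div (by positivity) (by positivity), log_sqrt hn0.le]
      linarith [abs_sub (log (3 * c)) (log n / 2), abs_of_nonneg (by positivity : 0 ≤ log n / 2)]
    have hcoef : A + log n / 2 ≤ A * (1 + |log ‖x‖| + log n) := by nlinarith
    calc _ ≤ 18 * π * (c / √n) ^ 2 * (|log (3 * (c / √n))| + 1) :=
          setIntegral_ball_abs_log_norm_le_of_norm_lt hx
      _ ≤ 18 * π * c ^ 2 / n * (A * (1 + |log ‖x‖| + log n)) := by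
          rw [hr2, mul_div_assoc]; gcongr; linarith
      _ = _ := by ring
  · have hcoef : |log ‖x‖| + log 2 ≤ 18 * A * (1 + |log ‖x‖|) := by nlinarith [log_two_lt_d9]
    calc _ ≤ π * (c / √n) ^ 2 * (|log ‖x‖| + log 2) :=
          setIntegral_ball_abs_log_norm_le_of_le_norm (by positivity) (not_lt.mp hx)
      _ ≤ π * c ^ 2 / n * (18 * A * (1 + |log ‖x‖|)) := by rw [hr2, mul_div_assoc]; gcongr
      _ = _ := by ring
end

section
/- Let R: ℝ² → ℝ be continuous and compactly supported, B a standard 2-dimensional Brownian motion, and t > 0. Then (n log n)^{−1} ∫₀^{nt}∫₀^{nt} E[R(B_s − B_u)] ds du → (t/π) ∫_{ℝ²} R(x) dx as n → ∞. -/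
open MeasureTheory ProbabilityTheory Filter

/-- The `d`-dimensional heat kernel at time `u`. -/
noncomputable def heatKernel (d : ℕ) (u : ℝ) (x : EuclideanSpace ℝ (Fin d)) : ℝ :=
  (2 * Real.pi * u) ^ (-(d : ℝ) / 2) * Real.exp (-‖x‖ ^ 2 / (2 * u))

/-- `B` is a standard `d`-dimensional Brownian motion under `P`. -/
def IsStdBM {Ω : Type*} [MeasurableSpace Ω] (d : ℕ) (P : Measure Ω)
    (B : ℝ → Ω → EuclideanSpace ℝ (Fin d)) : Prop :=
  (∀ t, Measurable (B t)) ∧ (∀ ω, B 0 ω = 0) ∧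
  (∀ s t : ℝ, 0 ≤ s → s < t →
    Measure.map (fun ω => B t ω - B s ω) P =
      volume.withDensity (fun x => ENNReal.ofReal (heatKernel d (t - s) x))) ∧
  (∀ (m : ℕ) (τ : Fin (m + 1) → ℝ), Monotone τ → (∀ i, 0 ≤ τ i) →
    iIndepFun
      (fun i : Fin m => fun ω => B (τ i.succ) ω - B (τ i.castSucc) ω) P)

open Topology Set

/-!
For `s ≠ u` the increment `B_s - B_u` has density `q_{|s-u|}`, so with `F r = ∫ R q_r` the double
integral is `∫₀^T ∫₀^T F |s - u| ds du = 2 ∫₀^T ∫₀^s F`. In dimension two `q_r ≈ (2πr)⁻¹` on the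
support of `R` for large `r`, so `r F r → (2π)⁻¹ ∫ R`. Two L'Hôpital-type comparisons of integrals,
against the weights `1 / r` and `log r`, give `∫₀^s F ~ (2π)⁻¹ ∫ R · log s` and then
`∫₀^T ∫₀^s F ~ (2π)⁻¹ ∫ R · T log T`; it remains to put `T = n t`.
-/

section HeatKernel

variable {d : ℕ} {r : ℝ}

lemma heatKernel_nonneg (hr : 0 < r) (x : EuclideanSpace ℝ (Fin d)) : 0 ≤ heatKernel d r x := by
  unfold heatKernel
  positivity

@[fun_prop]
lemma continuous_heatKernel (r : ℝ) : Continuous (heatKernel d r) := by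
  unfold heatKernel
  fun_prop

lemma heatKernel_neg (x : EuclideanSpace ℝ (Fin d)) : heatKernel d r (-x) = heatKernel d r x := by
  simp only [heatKernel, norm_neg]

lemma integral_heatKernel (hr : 0 < r) : ∫ x, heatKernel d r x = 1 := by
  have hpos : 0 < 2 * Real.pi * r := by positivity
  simp only [heatKernel, neg_div, div_eq_inv_mul (‖_‖ ^ 2), ← neg_mul]
  rw [integral_const_mul, GaussianFourier.integral_rexp_neg_mul_sq_norm (by positivity),
    finrank_euclideanSpace_fin, show Real.pi / (2 * r)⁻¹ = 2 * Real.pi * r by field_simp,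
    Real.rpow_neg hpos.le, inv_mul_cancel₀ (Real.rpow_pos_of_pos hpos _).ne']

lemma integrable_heatKernel (hr : 0 < r) : Integrable (heatKernel d r) :=
  Integrable.of_integral_ne_zero (by rw [integral_heatKernel hr]; exact one_ne_zero)

end HeatKernel

/-- `heatMean d R r = E[R(B_r)]`, the paper's `∫ R q_r`. -/
noncomputable def heatMean (d : ℕ) (R : EuclideanSpace ℝ (Fin d) → ℝ) (r : ℝ) : ℝ :=
  ∫ x, R x * heatKernel d r x

section HeatMean

variable {d : ℕ} {R : EuclideanSpace ℝ (Fin d) → ℝ} {r : ℝ}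

lemma norm_heatMean_le {C : ℝ} (hC : ∀ x, ‖R x‖ ≤ C) (hr : 0 < r) : ‖heatMean d R r‖ ≤ C := by
  have hbound : ∀ x, ‖R x * heatKernel d r x‖ ≤ C * heatKernel d r x := fun x => by
    rw [norm_mul, Real.norm_of_nonneg (heatKernel_nonneg hr x)]
    exact mul_le_mul_of_nonneg_right (hC x) (heatKernel_nonneg hr x)
  calc ‖heatMean d R r‖ ≤ ∫ x, C * heatKernel d r x :=
        norm_integral_le_of_norm_le ((integrable_heatKernel hr).const_mul C) (ae_of_all _ hbound)
    _ = C := by rw [integral_const_mul, integral_heatKernel hr, mul_one]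

lemma measurable_heatMean (hR : Measurable R) : Measurable (heatMean d R) := by
  have hjoint : Measurable fun p : ℝ × EuclideanSpace ℝ (Fin d) =>
      R p.2 * heatKernel d p.1 p.2 := by
    unfold heatKernel
    fun_prop
  exact (hjoint.stronglyMeasurable.integral_prod_right' (ν := volume)).measurable

lemma intervalIntegrable_heatMean (hR : Measurable R) {C : ℝ} (hC : ∀ x, ‖R x‖ ≤ C) {b : ℝ}
    (hb : 0 ≤ b) : IntervalIntegrable (heatMean d R) volume 0 b := by
  rw [intervalIntegrable_iff_integrableOn_Ioc_of_le hb]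
  exact Measure.integrableOn_of_bounded measure_Ioc_lt_top.ne
    (measurable_heatMean hR).aestronglyMeasurable
    (ae_restrict_of_forall_mem measurableSet_Ioc fun r hr => norm_heatMean_le hC hr.1)

lemma tendsto_integral_mul_exp_neg_sq_norm_div (hR : Integrable R) :
    Tendsto (fun r => ∫ x, R x * Real.exp (-‖x‖ ^ 2 / (2 * r))) atTop (𝓝 (∫ x, R x)) := by
  refine tendsto_integral_filter_of_dominated_convergence (fun x => ‖R x‖)
    (Eventually.of_forall fun r =>
      hR.aestronglyMeasurable.mul (by fun_prop : Continuous _).aestronglyMeasurable)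
    ?_ hR.norm (ae_of_all _ fun x => ?_)
  · filter_upwards [eventually_gt_atTop 0] with r hr
    refine ae_of_all _ fun x => ?_
    rw [norm_mul, Real.norm_of_nonneg (Real.exp_pos _).le]
    refine mul_le_of_le_one_right (norm_nonneg _) (Real.exp_le_one_iff.mpr ?_)
    exact div_nonpos_of_nonpos_of_nonneg (neg_nonpos.mpr (by positivity)) (by positivity)
  · have hexp : Tendsto (fun r : ℝ => -‖x‖ ^ 2 / (2 * r)) atTop (𝓝 0) :=
      tendsto_const_nhds.div_atTop (tendsto_id.const_mul_atTop two_pos)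
    simpa using ((Real.continuous_exp.tendsto 0).comp hexp).const_mul (R x)

lemma tendsto_rpow_mul_heatMean (hR : Integrable R) :
    Tendsto (fun r => r ^ ((d : ℝ) / 2) * heatMean d R r) atTop
      (𝓝 ((2 * Real.pi) ^ (-(d : ℝ) / 2) * ∫ x, R x)) := by
  refine ((tendsto_integral_mul_exp_neg_sq_norm_div hR).const_mul _).congr' ?_
  filter_upwards [eventually_gt_atTop 0] with r hr
  have hmean : heatMean d R r =
      (2 * Real.pi * r) ^ (-(d : ℝ) / 2) * ∫ x, R x * Real.exp (-‖x‖ ^ 2 / (2 * r)) := by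
    rw [heatMean, ← integral_const_mul]
    simp only [heatKernel, mul_left_comm]
  rw [hmean, ← mul_assoc, Real.mul_rpow (by positivity) hr.le, mul_left_comm, neg_div,
    Real.rpow_neg hr.le, mul_inv_cancel₀ (Real.rpow_pos_of_pos hr _).ne', mul_one]

end HeatMean

lemma heatMean_comp_neg {d : ℕ} (R : EuclideanSpace ℝ (Fin d) → ℝ) (r : ℝ) :
    heatMean d (fun x => R (-x)) r = heatMean d R r := by
  rw [heatMean, heatMean, ← integral_neg_eq_self]
  simp only [neg_neg, heatKernel_neg]

section BrownianIncrements

variable {Ω : Type*} [MeasurableSpace Ω] {d : ℕ} {P : Measure Ω}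
  {B : ℝ → Ω → EuclideanSpace ℝ (Fin d)} {R : EuclideanSpace ℝ (Fin d) → ℝ} {s u : ℝ}

lemma IsStdBM.integral_comp_increment (hB : IsStdBM d P B) (hR : Measurable R) (hu : 0 ≤ u)
    (hus : u < s) : ∫ ω, R (B s ω - B u ω) ∂P = heatMean d R (s - u) := by
  obtain ⟨hmeas, -, hlaw, -⟩ := hB
  have hq : Measurable fun x => ENNReal.ofReal (heatKernel d (s - u) x) :=
    ENNReal.measurable_ofReal.comp (continuous_heatKernel _).measurable
  rw [← integral_map (φ := fun ω => B s ω - B u ω) ((hmeas s).sub (hmeas u)).aemeasurable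
      hR.aestronglyMeasurable,
    hlaw u s hu hus, integral_withDensity_eq_integral_toReal_smul hq
      (ae_of_all _ fun _ => ENNReal.ofReal_lt_top), heatMean]
  congr 1 with x
  rw [ENNReal.toReal_ofReal (heatKernel_nonneg (sub_pos.mpr hus) x), smul_eq_mul, mul_comm]

lemma IsStdBM.integral_comp_sub (hB : IsStdBM d P B) (hR : Measurable R) (hs : 0 ≤ s)
    (hu : 0 ≤ u) (hne : s ≠ u) : ∫ ω, R (B s ω - B u ω) ∂P = heatMean d R |s - u| := by
  rcases hne.lt_or_gt with hlt | hgt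
  · have hswap : ∀ ω, R (B s ω - B u ω) = R (-(B u ω - B s ω)) := fun ω => by rw [neg_sub]
    simp only [hswap]
    rw [hB.integral_comp_increment (R := fun x => R (-x)) (hR.comp measurable_neg) hs hlt,
      heatMean_comp_neg, abs_sub_comm, abs_of_pos (sub_pos.mpr hlt)]
  · rw [hB.integral_comp_increment hR hu hgt, abs_of_pos (sub_pos.mpr hgt)]

lemma IsStdBM.integral_integral_comp_sub (hB : IsStdBM d P B) (hR : Measurable R) {T : ℝ}
    (hT : 0 ≤ T) :
    ∫ s in (0:ℝ)..T, ∫ u in (0:ℝ)..T, ∫ ω, R (B s ω - B u ω) ∂P =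
      ∫ s in (0:ℝ)..T, ∫ u in (0:ℝ)..T, heatMean d R |s - u| := by
  refine intervalIntegral.integral_congr fun s hs => intervalIntegral.integral_congr_ae ?_
  rw [uIcc_of_le hT] at hs
  filter_upwards [volume.ae_ne s] with u hus hu
  rw [uIoc_of_le hT] at hu
  exact hB.integral_comp_sub hR hs.1 hu.1.le hus.symm

end BrownianIncrements

section DoubleIntegral

variable {f : ℝ → ℝ}

lemma integral_comp_abs_sub (hf : ∀ b ≥ 0, IntervalIntegrable f volume 0 b) {s T : ℝ}
    (hs : 0 ≤ s) (hsT : s ≤ T) :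
    ∫ u in (0:ℝ)..T, f |s - u| = (∫ r in (0:ℝ)..s, f r) + ∫ r in (0:ℝ)..(T - s), f r := by
  have hleft : EqOn (fun u => f (s - u)) (fun u => f |s - u|) (uIoo 0 s) := fun u hu => by
    rw [uIoo_of_le hs] at hu
    simp only [abs_of_pos (sub_pos.mpr hu.2)]
  have hright : EqOn (fun u => f (u - s)) (fun u => f |s - u|) (uIoo s T) := fun u hu => by
    rw [uIoo_of_le hsT] at hu
    simp only [abs_sub_comm s, abs_of_pos (sub_pos.mpr hu.1)]
  have hint_left : IntervalIntegrable (fun u => f |s - u|) volume 0 s := by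
    refine IntervalIntegrable.congr_uIoo ?_ hleft
    simpa using ((hf s hs).comp_sub_left s).symm
  have hint_right : IntervalIntegrable (fun u => f |s - u|) volume s T := by
    refine IntervalIntegrable.congr_uIoo ?_ hright
    simpa using (hf (T - s) (sub_nonneg.mpr hsT)).comp_sub_right s
  rw [← intervalIntegral.integral_add_adjacent_intervals hint_left hint_right,
    ← intervalIntegral.integral_congr_uIoo hleft, ← intervalIntegral.integral_congr_uIoo hright,
    intervalIntegral.integral_comp_sub_left, intervalIntegral.integral_comp_sub_right]
  simp

lemma intervalIntegrable_primitive (hf : ∀ b ≥ 0, IntervalIntegrable f volume 0 b) {T : ℝ}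
    (hT : 0 ≤ T) : IntervalIntegrable (fun s => ∫ r in (0:ℝ)..s, f r) volume 0 T :=
  (intervalIntegral.continuousOn_primitive_interval
    ((intervalIntegrable_iff' (μ := volume)).mp (hf T hT))).intervalIntegrable

lemma integral_integral_comp_abs_sub (hf : ∀ b ≥ 0, IntervalIntegrable f volume 0 b) {T : ℝ}
    (hT : 0 ≤ T) :
    ∫ s in (0:ℝ)..T, ∫ u in (0:ℝ)..T, f |s - u| = 2 * ∫ s in (0:ℝ)..T, ∫ r in (0:ℝ)..s, f r := by
  have hH := intervalIntegrable_primitive hf hT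
  rw [intervalIntegral.integral_congr fun s hs =>
      integral_comp_abs_sub hf (uIcc_of_le hT ▸ hs).1 (uIcc_of_le hT ▸ hs).2,
    intervalIntegral.integral_add hH (by simpa using (hH.comp_sub_left T).symm),
    intervalIntegral.integral_comp_sub_left (fun s => ∫ r in (0:ℝ)..s, f r)]
  simp only [sub_self, sub_zero]
  ring

end DoubleIntegral

section IntegralRatio

variable {g ψ : ℝ → ℝ} {a L : ℝ}

lemma norm_integral_sub_mul_le {M T ε : ℝ} (hMT : M ≤ T) (hψi : IntervalIntegrable ψ volume M T)
    (hψ : ∀ x ∈ Ioc M T, 0 < ψ x) (hclose : ∀ x ∈ Ioc M T, |g x / ψ x - L| ≤ ε) :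
    ‖∫ x in M..T, (g x - L * ψ x)‖ ≤ ε * ∫ x in M..T, ψ x := by
  rw [← intervalIntegral.integral_const_mul]
  refine intervalIntegral.norm_integral_le_of_norm_le hMT (ae_of_all _ fun x hx => ?_)
    (hψi.const_mul ε)
  have hψx := hψ x hx
  calc ‖g x - L * ψ x‖ = ψ x * |g x / ψ x - L| := by
        rw [Real.norm_eq_abs, ← abs_of_pos hψx, ← abs_mul, abs_of_pos hψx, mul_sub,
          mul_div_cancel₀ _ hψx.ne', mul_comm L]
    _ ≤ ε * ψ x := by rw [mul_comm]; exact mul_le_mul_of_nonneg_right (hclose x hx) hψx.le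

lemma isLittleO_integral_sub_mul_of_tendsto_div (hψ : ∀ x > a, 0 < ψ x)
    (hg : ∀ b ≥ a, IntervalIntegrable g volume a b)
    (hψi : ∀ b ≥ a, IntervalIntegrable ψ volume a b)
    (hdiv : Tendsto (fun T => ∫ x in a..T, ψ x) atTop atTop)
    (hlim : Tendsto (fun x => g x / ψ x) atTop (𝓝 L)) :
    (fun T => ∫ x in a..T, (g x - L * ψ x)) =o[atTop] fun T => ∫ x in a..T, ψ x := by
  have hint : ∀ b ≥ a, IntervalIntegrable (fun x => g x - L * ψ x) volume a b :=
    fun b hb => (hg b hb).sub ((hψi b hb).const_mul L)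
  refine Asymptotics.IsLittleO.of_bound fun c hc => ?_
  obtain ⟨M₀, hM₀⟩ := eventually_atTop.mp
    (hlim.eventually (Metric.closedBall_mem_nhds L (half_pos hc)))
  set M := max M₀ a
  have hM : a ≤ M := le_max_right _ _
  set K := ‖∫ x in a..M, (g x - L * ψ x)‖
  filter_upwards [eventually_ge_atTop M, hdiv.eventually_ge_atTop (K / (c / 2))] with T hMT hKT
  have hψMT : IntervalIntegrable ψ volume M T := (hψi M hM).symm.trans (hψi T (hM.trans hMT))
  have hΨM : 0 ≤ ∫ x in a..M, ψ x := by
    rw [intervalIntegral.integral_of_le hM]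
    exact setIntegral_nonneg measurableSet_Ioc fun x hx => (hψ x hx.1).le
  have htail := norm_integral_sub_mul_le (g := g) (L := L) hMT hψMT
    (fun x hx => hψ x (hM.trans_lt hx.1))
    (fun x hx => (Real.dist_eq _ _).symm.le.trans (hM₀ x ((le_max_left _ _).trans hx.1.le)))
  have hK : K ≤ c / 2 * ∫ x in a..T, ψ x := (div_le_iff₀' (half_pos hc)).mp hKT
  have hΨT : 0 ≤ ∫ x in a..T, ψ x := (div_nonneg (norm_nonneg _) (half_pos hc).le).trans hKT
  have hΨ := intervalIntegral.integral_add_adjacent_intervals (hψi M hM) hψMT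
  rw [← intervalIntegral.integral_add_adjacent_intervals (hint M hM)
    ((hint M hM).symm.trans (hint T (hM.trans hMT)))]
  calc _ ≤ K + ‖∫ x in M..T, (g x - L * ψ x)‖ := norm_add_le _ _
    _ ≤ c / 2 * (∫ x in a..T, ψ x) + c / 2 * ∫ x in M..T, ψ x := add_le_add hK htail
    _ ≤ c * ‖∫ x in a..T, ψ x‖ := by
      have hΨMT : ∫ x in M..T, ψ x ≤ ∫ x in a..T, ψ x := by linarith
      rw [Real.norm_eq_abs, abs_of_nonneg hΨT]
      linarith [mul_le_mul_of_nonneg_left hΨMT (half_pos hc).le]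

lemma tendsto_integral_div_integral_of_tendsto_div (hψ : ∀ x > a, 0 < ψ x)
    (hg : ∀ b ≥ a, IntervalIntegrable g volume a b)
    (hψi : ∀ b ≥ a, IntervalIntegrable ψ volume a b)
    (hdiv : Tendsto (fun T => ∫ x in a..T, ψ x) atTop atTop)
    (hlim : Tendsto (fun x => g x / ψ x) atTop (𝓝 L)) :
    Tendsto (fun T => (∫ x in a..T, g x) / ∫ x in a..T, ψ x) atTop (𝓝 L) := by
  have h := (isLittleO_integral_sub_mul_of_tendsto_div hψ hg hψi hdiv hlim
    ).tendsto_div_nhds_zero.const_add L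
  rw [add_zero] at h
  refine h.congr' ?_
  filter_upwards [eventually_ge_atTop a, hdiv.eventually_gt_atTop 0] with T haT hpos
  rw [intervalIntegral.integral_sub (hg T haT) ((hψi T haT).const_mul L),
    intervalIntegral.integral_const_mul]
  field_simp
  ring

end IntegralRatio

lemma Filter.Tendsto.const_add_div_of_tendsto_atTop {α : Type*} {l : Filter α} {u v : α → ℝ}
    {L : ℝ} (h : Tendsto (fun T => u T / v T) l (𝓝 L)) (hv : Tendsto v l atTop) (c : ℝ) :
    Tendsto (fun T => (c + u T) / v T) l (𝓝 L) := by
  simpa only [add_div, zero_add] using (tendsto_const_nhds.div_atTop hv).add h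

lemma tendsto_integral_div_log_of_tendsto_mul {f : ℝ → ℝ} {L : ℝ}
    (hf : ∀ b ≥ 0, IntervalIntegrable f volume 0 b)
    (hlim : Tendsto (fun r => r * f r) atTop (𝓝 L)) :
    Tendsto (fun s => (∫ r in (0:ℝ)..s, f r) / Real.log s) atTop (𝓝 L) := by
  have hlog : ∀ᶠ T in atTop, ∫ x in (1:ℝ)..T, x⁻¹ = Real.log T := by
    filter_upwards [eventually_gt_atTop 0] with T hT
    rw [integral_inv_of_pos one_pos hT, div_one]
  have hratio := tendsto_integral_div_integral_of_tendsto_div (a := 1) (g := f)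
    (fun x hx => inv_pos.mpr (one_pos.trans hx))
    (fun b hb => (hf 1 zero_le_one).symm.trans (hf b (zero_le_one.trans hb)))
    (fun b hb => (continuousOn_inv₀.mono fun x hx => by
      rw [uIcc_of_le hb] at hx; exact (one_pos.trans_le hx.1).ne').intervalIntegrable)
    (Real.tendsto_log_atTop.congr' (hlog.mono fun _ h => h.symm))
    (hlim.congr fun r => by rw [div_inv_eq_mul, mul_comm])
  have hratio' : Tendsto (fun T => (∫ x in (1:ℝ)..T, f x) / Real.log T) atTop (𝓝 L) :=
    hratio.congr' (hlog.mono fun T hT => by rw [hT])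
  refine (hratio'.const_add_div_of_tendsto_atTop Real.tendsto_log_atTop
    (∫ r in (0:ℝ)..1, f r)).congr' ?_
  filter_upwards [eventually_ge_atTop 1] with s hs
  rw [intervalIntegral.integral_add_adjacent_intervals (hf 1 zero_le_one)
    ((hf 1 zero_le_one).symm.trans (hf s (zero_le_one.trans hs)))]

lemma integral_log_from_one (T : ℝ) : ∫ x in (1:ℝ)..T, Real.log x = T * (Real.log T - 1) + 1 := by
  rw [integral_log]
  simp only [Real.log_one, mul_zero, sub_zero]
  ring

lemma tendsto_integral_div_mul_log_of_tendsto_div_log {h : ℝ → ℝ} {L : ℝ}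
    (hh : ∀ b ≥ 0, IntervalIntegrable h volume 0 b)
    (hlim : Tendsto (fun s => h s / Real.log s) atTop (𝓝 L)) :
    Tendsto (fun T => (∫ s in (0:ℝ)..T, h s) / (T * Real.log T)) atTop (𝓝 L) := by
  have hdiv : Tendsto (fun T => ∫ x in (1:ℝ)..T, Real.log x) atTop atTop := by
    simp only [integral_log_from_one]
    exact tendsto_atTop_add_const_right _ _
      (tendsto_id.atTop_mul_atTop₀ (tendsto_atTop_add_const_right _ _ Real.tendsto_log_atTop))
  have hratio := (tendsto_integral_div_integral_of_tendsto_div (a := 1) (g := h)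
    (fun x hx => Real.log_pos hx)
    (fun b hb => (hh 1 zero_le_one).symm.trans (hh b (zero_le_one.trans hb)))
    (fun _ _ => intervalIntegral.intervalIntegrable_log') hdiv hlim
    ).const_add_div_of_tendsto_atTop hdiv (∫ s in (0:ℝ)..1, h s)
  have hcompare : Tendsto (fun T => (∫ x in (1:ℝ)..T, Real.log x) / (T * Real.log T)) atTop
      (𝓝 1) := by
    have h0 : Tendsto (fun T => 1 - (Real.log T)⁻¹ + (T * Real.log T)⁻¹) atTop (𝓝 1) := by
      simpa using (tendsto_const_nhds.sub Real.tendsto_log_atTop.inv_tendsto_atTop).add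
        (tendsto_id.atTop_mul_atTop₀ Real.tendsto_log_atTop).inv_tendsto_atTop
    refine h0.congr' ?_
    filter_upwards [eventually_gt_atTop 1] with T hT
    have hlog : 0 < Real.log T := Real.log_pos hT
    have hT0 : T ≠ 0 := by positivity
    rw [integral_log_from_one]
    field_simp
  rw [← mul_one L]
  refine (hratio.mul hcompare).congr' ?_
  filter_upwards [eventually_ge_atTop 1, hdiv.eventually_gt_atTop 0] with T hT hpos
  rw [div_mul_div_cancel₀ hpos.ne', intervalIntegral.integral_add_adjacent_intervals
    (hh 1 zero_le_one) ((hh 1 zero_le_one).symm.trans (hh T (zero_le_one.trans hT)))]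

lemma tendsto_natCast_mul_of_tendsto_div_mul_log {φ : ℝ → ℝ} {L t : ℝ} (ht : 0 < t)
    (h : Tendsto (fun T => φ T / (T * Real.log T)) atTop (𝓝 L)) :
    Tendsto (fun n : ℕ => ((n : ℝ) * Real.log n)⁻¹ * φ (n * t)) atTop (𝓝 (t * L)) := by
  have hseq : Tendsto (fun n : ℕ => (n : ℝ) * t) atTop atTop :=
    tendsto_natCast_atTop_atTop.atTop_mul_const ht
  have hlogn : Tendsto (fun n : ℕ => Real.log n) atTop atTop :=
    Real.tendsto_log_atTop.comp tendsto_natCast_atTop_atTop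
  have hfactor : Tendsto (fun n : ℕ => t * (1 + Real.log t / Real.log n)) atTop (𝓝 t) := by
    simpa using ((tendsto_const_nhds (x := Real.log t)).div_atTop hlogn).const_add 1 |>.const_mul t
  rw [mul_comm t]
  refine ((h.comp hseq).mul hfactor).congr' ?_
  filter_upwards [eventually_gt_atTop 1, hseq.eventually (eventually_gt_atTop 1)] with n hn hnt
  have hn1 : (1 : ℝ) < n := by exact_mod_cast hn
  have hlogn : 0 < Real.log n := Real.log_pos hn1
  have hlognt : 0 < Real.log n + Real.log t := by
    rw [← Real.log_mul (by positivity) ht.ne']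
    exact Real.log_pos hnt
  rw [Function.comp_apply, Real.log_mul (by positivity) ht.ne']
  field_simp

theorem stmt7_general {Ω : Type*} [MeasurableSpace Ω] (P : Measure Ω)
    (B : ℝ → Ω → EuclideanSpace ℝ (Fin 2)) (hB : IsStdBM 2 P B)
    (R : EuclideanSpace ℝ (Fin 2) → ℝ) (hRc : Continuous R) (hRs : HasCompactSupport R)
    (t : ℝ) (ht : 0 < t) :
    Tendsto (fun n : ℕ =>
        ((n : ℝ) * Real.log n)⁻¹ *
          ∫ s in (0:ℝ)..((n : ℝ) * t), ∫ u in (0:ℝ)..((n : ℝ) * t),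
            ∫ ω, R (B s ω - B u ω) ∂P)
      atTop (nhds (t / Real.pi * ∫ x, R x)) := by
  obtain ⟨C, hC⟩ := hRs.exists_bound_of_continuous hRc
  have hF : ∀ b ≥ 0, IntervalIntegrable (heatMean 2 R) volume 0 b :=
    fun b hb => intervalIntegrable_heatMean hRc.measurable hC hb
  have hmean : Tendsto (fun r => r * heatMean 2 R r) atTop
      (𝓝 ((2 * Real.pi)⁻¹ * ∫ x, R x)) := by
    simpa [Real.rpow_neg_one] using
      tendsto_rpow_mul_heatMean (hRc.integrable_of_hasCompactSupport hRs)
  have hprimitive := tendsto_integral_div_mul_log_of_tendsto_div_log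
    (fun _ => intervalIntegrable_primitive hF) (tendsto_integral_div_log_of_tendsto_mul hF hmean)
  have hdouble := (hprimitive.const_mul 2).congr' <| (eventually_ge_atTop 0).mono fun T hT => by
    rw [← mul_div_assoc, ← integral_integral_comp_abs_sub hF hT,
      ← hB.integral_integral_comp_sub hRc.measurable hT]
  convert tendsto_natCast_mul_of_tendsto_div_mul_log ht hdouble using 2
  field_simp

/-- For `d = 2` and continuous compactly supported `R`,
`(n log n)⁻¹ ∫₀^{nt}∫₀^{nt} E[R(B_s - B_u)] ds du → (t/π) ∫_{ℝ²} R(x) dx`. -/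
theorem stmt7 {Ω : Type*} [MeasurableSpace Ω] (P : Measure Ω) [IsProbabilityMeasure P]
    (B : ℝ → Ω → EuclideanSpace ℝ (Fin 2)) (hB : IsStdBM 2 P B)
    (R : EuclideanSpace ℝ (Fin 2) → ℝ) (hRc : Continuous R) (hRs : HasCompactSupport R)
    (t : ℝ) (ht : 0 < t) :
    Tendsto (fun n : ℕ =>
        ((n : ℝ) * Real.log n)⁻¹ *
          ∫ s in (0:ℝ)..((n : ℝ) * t), ∫ u in (0:ℝ)..((n : ℝ) * t),
            ∫ ω, R (B s ω - B u ω) ∂P)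
      atTop (nhds (t / Real.pi * ∫ x, R x)) :=
  stmt7_general P B hB R hRc hRs t ht
end

section
/- Let φ: ℝ → ℝ be continuous and compactly supported, B a standard 1-dimensional Brownian motion with jointly continuous local time L_t(x), and define for 0 = t₀ < t₁ < … < t_N ≤ 1 and α_i ∈ ℝ the function F_n(y) = Σ_{i=1}^N α_i n^{1/4} ∫_{t_{i−1}}^{t_i} φ(√n B_s − y) ds. Then almost surely ∫_ℝ F_n(y)² dy → R̂(0) Σ_{i,j=1}^N α_i α_j ∫_ℝ (L_{t_i}(x)−L_{t_{i−1}}(x))(L_{t_j}(x)−L_{t_{j−1}}(x)) dx as n → ∞, where R̂(0) = ∫_ℝ R(x) dx with R(x) = ∫_ℝ φ(x+z)φ(z) dz, so that R̂(0) = (∫_ℝ φ(x) dx)². -/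
open MeasureTheory Filter

private lemma bdd_of_cpt {f : ℝ → ℝ} (hc : Continuous f) (hs : HasCompactSupport f) :
    ∃ C, 0 ≤ C ∧ ∀ x, |f x| ≤ C := by
  obtain ⟨x₀, hx₀⟩ := hc.abs.exists_forall_ge_of_hasCompactSupport
    (hs.comp_left (g := fun y : ℝ => |y|) abs_zero)
  exact ⟨|f x₀|, abs_nonneg _, hx₀⟩

private lemma radius_of_cpt {f : ℝ → ℝ} (hs : HasCompactSupport f) :
    ∃ M, 0 ≤ M ∧ ∀ x, M < |x| → f x = 0 := by
  obtain ⟨r, hr⟩ := hs.isBounded.subset_closedBall 0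
  refine ⟨max r 0, le_max_right _ _, fun x hx => ?_⟩
  apply image_eq_zero_of_notMem_tsupport
  intro hmem
  have h2 := hr hmem
  rw [Metric.mem_closedBall, Real.dist_eq, sub_zero] at h2
  have h3 : |x| ≤ max r 0 := h2.trans (le_max_left r 0)
  exact absurd h3 (not_le.2 hx)

private lemma cpt_of_radius {f : ℝ → ℝ} {M : ℝ} (h : ∀ x, M < |x| → f x = 0) :
    HasCompactSupport f :=
  HasCompactSupport.intro (isCompact_closedBall 0 M) fun x hx => h x (by
    rw [Metric.mem_closedBall, Real.dist_eq, sub_zero, not_le] at hx; exact hx)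

variable {φ : ℝ → ℝ}

private lemma R_cont (hφc : Continuous φ) (hφs : HasCompactSupport φ)
    {C : ℝ} (hC : ∀ x, |φ x| ≤ C) :
    Continuous (fun v => ∫ u, φ (v + u) * φ u) := by
  apply continuous_of_dominated (bound := fun u => C * |φ u|)
  · intro v
    exact ((hφc.comp (continuous_const.add continuous_id)).mul hφc).aestronglyMeasurable
  · intro v
    filter_upwards with u
    rw [Real.norm_eq_abs, abs_mul]
    exact mul_le_mul_of_nonneg_right (hC _) (abs_nonneg _)
  · exact (hφc.abs.integrable_of_hasCompactSupport
      (hφs.comp_left (g := fun y : ℝ => |y|) abs_zero)).const_mul C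
  · filter_upwards with u
    exact (hφc.comp (continuous_id.add continuous_const)).mul continuous_const

private lemma R_zero {M : ℝ} (hM0 : 0 ≤ M) (hM : ∀ x, M < |x| → φ x = 0) {v : ℝ} (hv : 2 * M < |v|) :
    ∀ u : ℝ, φ (v + u) * φ u = 0 := by
  intro u
  by_cases hu : M < |u|
  · rw [hM u hu, mul_zero]
  · push_neg at hu
    have hle : M < |v + u| := by
      have h2 := abs_add_le (v + u) (-u)
      rw [add_neg_cancel_right, abs_neg] at h2
      linarith
    rw [hM _ hle, zero_mul]

private lemma R_supp {M : ℝ} (hM0 : 0 ≤ M) (hM : ∀ x, M < |x| → φ x = 0) :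
    HasCompactSupport (fun v => ∫ u, φ (v + u) * φ u) := by
  apply cpt_of_radius (M := 2 * M)
  intro v hv
  simp only [R_zero hM0 hM hv, integral_zero]

private lemma R_integral (hφc : Continuous φ) (hφs : HasCompactSupport φ)
    {M : ℝ} (hM0 : 0 ≤ M) (hM : ∀ x, M < |x| → φ x = 0) :
    (∫ v, ∫ u, φ (v + u) * φ u) = (∫ x, φ x) ^ 2 := by
  have hint : Integrable (Function.uncurry fun v u => φ (v + u) * φ u)
      ((volume : Measure ℝ).prod volume) := by
    rw [← Measure.volume_eq_prod]
    apply Continuous.integrable_of_hasCompactSupport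
    · exact (hφc.comp (continuous_fst.add continuous_snd)).mul (hφc.comp continuous_snd)
    · apply HasCompactSupport.intro
        (K := Metric.closedBall (0:ℝ) (2*M) ×ˢ Metric.closedBall (0:ℝ) (2*M))
        ((isCompact_closedBall _ _).prod (isCompact_closedBall _ _))
      rintro ⟨v, u⟩ hq
      rw [Set.mem_prod, Metric.mem_closedBall, Metric.mem_closedBall, Real.dist_eq,
        Real.dist_eq, sub_zero, sub_zero] at hq
      push_neg at hq
      by_cases h1 : 2 * M < |v|
      · exact R_zero hM0 hM h1 u
      · push_neg at h1
        have h2 : 2 * M < |u| := hq h1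
        have hMu : M < |u| := by linarith
        show φ (v + u) * φ u = 0
        rw [hM u hMu, mul_zero]
  calc (∫ v, ∫ u, φ (v + u) * φ u)
      = ∫ u, ∫ v, φ (v + u) * φ u := integral_integral_swap hint
    _ = ∫ u, (∫ v, φ (v + u)) * φ u := by
        refine integral_congr_ae (Filter.Eventually.of_forall fun u => ?_)
        show (∫ v, φ (v + u) * φ u) = (∫ v, φ (v + u)) * φ u
        rw [integral_mul_const]
    _ = ∫ u, (∫ x, φ x) * φ u := by
        refine integral_congr_ae (Filter.Eventually.of_forall fun u => ?_)
        show (∫ v, φ (v + u)) * φ u = (∫ x, φ x) * φ u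
        rw [integral_add_right_eq_self]
    _ = (∫ x, φ x) * (∫ x, φ x) := integral_const_mul _ _
    _ = (∫ x, φ x) ^ 2 := (sq _).symm

private lemma J_cont (hφc : Continuous φ) {Δ : ℝ → ℝ} (hΔc : Continuous Δ)
    (hΔs : HasCompactSupport Δ) {C : ℝ} (hC : ∀ x, |φ x| ≤ C) (s : ℝ) :
    Continuous (fun y => ∫ x, φ (s * x - y) * Δ x) := by
  apply continuous_of_dominated (bound := fun x => C * |Δ x|)
  · intro y
    exact ((hφc.comp ((continuous_const.mul continuous_id).sub continuous_const)).mul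
      hΔc).aestronglyMeasurable
  · intro y
    filter_upwards with x
    rw [Real.norm_eq_abs, abs_mul]
    exact mul_le_mul_of_nonneg_right (hC _) (abs_nonneg _)
  · exact (hΔc.abs.integrable_of_hasCompactSupport
      (hΔs.comp_left (g := fun y : ℝ => |y|) abs_zero)).const_mul C
  · filter_upwards with x
    exact (hφc.comp (continuous_const.sub continuous_id)).mul continuous_const

private lemma J_supp {Δ : ℝ → ℝ} {M s : ℝ} (hM0 : 0 ≤ M) (hs : 0 < s)
    (hMφ : ∀ x, M < |x| → φ x = 0) (hMΔ : ∀ x, M < |x| → Δ x = 0) :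
    HasCompactSupport (fun y => ∫ x, φ (s * x - y) * Δ x) := by
  apply cpt_of_radius (M := s * M + M)
  intro y hy
  have hz : ∀ x : ℝ, φ (s * x - y) * Δ x = 0 := by
    intro x
    by_cases hx : M < |x|
    · rw [hMΔ x hx, mul_zero]
    · push_neg at hx
      have h1 : |s * x| ≤ s * M := by
        rw [abs_mul, abs_of_pos hs]
        exact mul_le_mul_of_nonneg_left hx hs.le
      have h2 : M < |s * x - y| := by
        have h4 : |y| ≤ |s * x - y| + |s * x| := by
          have h5 := abs_sub (s * x - y) (s * x)
          rw [show s * x - y - s * x = -y by ring, abs_neg] at h5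
          exact h5
        linarith
      rw [hMφ _ h2, zero_mul]
  simp only [hz, integral_zero]

private lemma cpt_of_radius2 {f : ℝ × ℝ → ℝ} {M1 M2 : ℝ}
    (h : ∀ p : ℝ × ℝ, M1 < |p.1| ∨ M2 < |p.2| → f p = 0) : HasCompactSupport f := by
  apply HasCompactSupport.intro
    ((isCompact_closedBall (0:ℝ) M1).prod (isCompact_closedBall (0:ℝ) M2))
  intro p hp
  apply h
  rw [Set.mem_prod, Metric.mem_closedBall, Metric.mem_closedBall, Real.dist_eq, Real.dist_eq,
    sub_zero, sub_zero] at hp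
  rcases not_and_or.1 hp with h1 | h2
  · exact Or.inl (not_le.1 h1)
  · exact Or.inr (not_le.1 h2)

private lemma cpt_of_radius3 {f : ℝ × (ℝ × ℝ) → ℝ} {M1 M2 M3 : ℝ}
    (h : ∀ q : ℝ × (ℝ × ℝ), M1 < |q.1| ∨ M2 < |q.2.1| ∨ M3 < |q.2.2| → f q = 0) :
    HasCompactSupport f := by
  apply HasCompactSupport.intro
    ((isCompact_closedBall (0:ℝ) M1).prod
      ((isCompact_closedBall (0:ℝ) M2).prod (isCompact_closedBall (0:ℝ) M3)))
  intro q hq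
  apply h
  rw [Set.mem_prod, Set.mem_prod, Metric.mem_closedBall, Metric.mem_closedBall,
    Metric.mem_closedBall, Real.dist_eq, Real.dist_eq, Real.dist_eq,
    sub_zero, sub_zero, sub_zero] at hq
  by_cases h1 : |q.1| ≤ M1
  · by_cases h2 : |q.2.1| ≤ M2
    · exact Or.inr (Or.inr (not_le.1 fun h3 => hq ⟨h1, h2, h3⟩))
    · exact Or.inr (Or.inl (not_le.1 h2))
  · exact Or.inl (not_le.1 h1)

private lemma phi_far {M s x y : ℝ} (hs : 0 < s) (hMφ : ∀ x, M < |x| → φ x = 0)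
    (hx : |x| ≤ M) (hy : s * M + M < |y|) : φ (s * x - y) = 0 := by
  apply hMφ
  have h1 : |s * x| ≤ s * M := by
    rw [abs_mul, abs_of_pos hs]
    exact mul_le_mul_of_nonneg_left hx hs.le
  have h4 : |y| ≤ |s * x - y| + |s * x| := by
    have h5 := abs_sub (s * x - y) (s * x)
    rw [show s * x - y - s * x = -y by ring, abs_neg] at h5
    exact h5
  linarith

private lemma key_eq (hφc : Continuous φ) {Δi Δj : ℝ → ℝ}
    (hic : Continuous Δi) (hjc : Continuous Δj)
    {M s : ℝ} (hM0 : 0 ≤ M) (hs : 0 < s)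
    (hMφ : ∀ x, M < |x| → φ x = 0)
    (hMi : ∀ x, M < |x| → Δi x = 0) (hMj : ∀ x, M < |x| → Δj x = 0) :
    s * ∫ y, (∫ x, φ (s * x - y) * Δi x) * (∫ x, φ (s * x - y) * Δj x)
      = ∫ p : ℝ × ℝ, Δi p.1 * Δj (p.1 - p.2 / s) * (∫ u, φ (p.2 + u) * φ u) := by
  have hφs : HasCompactSupport φ := cpt_of_radius hMφ
  set Rf := fun v : ℝ => ∫ u, φ (v + u) * φ u with hRfdef
  have hRrad : ∀ v, 2 * M < |v| → Rf v = 0 := fun v hv => by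
    simp only [hRfdef, R_zero hM0 hMφ hv, integral_zero]
  obtain ⟨Cφ, hCφ0, hCφ⟩ := bdd_of_cpt hφc hφs
  have hRc : Continuous Rf := R_cont hφc hφs hCφ
  -- the big integrand
  set F : ℝ → ℝ × ℝ → ℝ :=
    fun y p => (φ (s * p.1 - y) * Δi p.1) * (φ (s * p.2 - y) * Δj p.2) with hFdef
  have hFc : Continuous (Function.uncurry F) := by
    show Continuous fun q : ℝ × (ℝ × ℝ) =>
      (φ (s * q.2.1 - q.1) * Δi q.2.1) * (φ (s * q.2.2 - q.1) * Δj q.2.2)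
    fun_prop
  have hFint : Integrable (Function.uncurry F) ((volume : Measure ℝ).prod volume) := by
    rw [← Measure.volume_eq_prod]
    apply hFc.integrable_of_hasCompactSupport
    apply cpt_of_radius3 (M1 := s * M + M) (M2 := M) (M3 := M)
    rintro ⟨y, x, z⟩ h
    show (φ (s * x - y) * Δi x) * (φ (s * z - y) * Δj z) = 0
    by_cases h2 : M < |x|
    · rw [hMi x h2, mul_zero, zero_mul]
    by_cases h3 : M < |z|
    · rw [hMj z h3, mul_zero, mul_zero]
    push_neg at h2 h3
    have h1 : s * M + M < |y| := by
      rcases h with h | h | h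
      · exact h
      · exact absurd h (not_lt.2 h2)
      · exact absurd h (not_lt.2 h3)
    rw [phi_far hs hMφ h2 h1, zero_mul, zero_mul]
  have hint1 : Integrable (fun p : ℝ × ℝ => Δi p.1 * Δj p.2 * Rf (s * p.1 - s * p.2))
      ((volume : Measure ℝ).prod volume) := by
    rw [← Measure.volume_eq_prod]
    apply Continuous.integrable_of_hasCompactSupport
    · fun_prop
    · apply cpt_of_radius2 (M1 := M) (M2 := M)
      rintro ⟨x, z⟩ h
      show Δi x * Δj z * Rf (s * x - s * z) = 0
      rcases h with h | h
      · rw [hMi x h, zero_mul, zero_mul]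
      · rw [hMj z h, mul_zero, zero_mul]
  have hint2 : Integrable (fun p : ℝ × ℝ => Δi p.1 * Δj (p.1 - p.2 / s) * Rf p.2)
      ((volume : Measure ℝ).prod volume) := by
    rw [← Measure.volume_eq_prod]
    apply Continuous.integrable_of_hasCompactSupport
    · fun_prop
    · apply cpt_of_radius2 (M1 := M) (M2 := 2 * M)
      rintro ⟨x, v⟩ h
      show Δi x * Δj (x - v / s) * Rf v = 0
      rcases h with h | h
      · rw [hMi x h, zero_mul, zero_mul]
      · rw [hRrad v h, mul_zero]
  have stepC : ∀ p : ℝ × ℝ, (∫ y, F y p) = Δi p.1 * Δj p.2 * Rf (s * p.1 - s * p.2) := by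
    intro p
    have h1 : (fun y => F y p) = fun y =>
        (Δi p.1 * Δj p.2) * ((fun u => φ (s * p.1 - s * p.2 + u) * φ u) (s * p.2 - y)) := by
      funext y
      show (φ (s * p.1 - y) * Δi p.1) * (φ (s * p.2 - y) * Δj p.2)
        = Δi p.1 * Δj p.2 * (φ (s * p.1 - s * p.2 + (s * p.2 - y)) * φ (s * p.2 - y))
      rw [show s * p.1 - s * p.2 + (s * p.2 - y) = s * p.1 - y by ring]
      ring
    rw [h1, integral_const_mul, integral_sub_left_eq_self
      (fun u => φ (s * p.1 - s * p.2 + u) * φ u) volume (s * p.2)]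
  have stepE : ∀ x : ℝ, s * ∫ z, Δi x * Δj z * Rf (s * x - s * z)
      = ∫ v, Δi x * Δj (x - v / s) * Rf v := by
    intro x
    have e1 := MeasureTheory.Measure.integral_comp_mul_left
      (fun v => Δi x * Δj (x - v / s) * Rf v) s
    have e1' : (fun w => Δi x * Δj (x - s * w / s) * Rf (s * w))
        = fun w => Δi x * Δj (x - w) * Rf (s * w) := by
      funext w
      rw [mul_div_cancel_left₀ w hs.ne']
    rw [e1'] at e1
    have e2 := integral_sub_left_eq_self
      (fun z => Δi x * Δj z * Rf (s * x - s * z)) volume x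
    have e2' : (fun w => Δi x * Δj (x - w) * Rf (s * x - s * (x - w)))
        = fun w => Δi x * Δj (x - w) * Rf (s * w) := by
      funext w
      rw [show s * x - s * (x - w) = s * w by ring]
    rw [e2'] at e2
    rw [← e2, e1, abs_of_pos (inv_pos.2 hs), smul_eq_mul, ← mul_assoc,
      mul_inv_cancel₀ hs.ne', one_mul]
  calc s * ∫ y, (∫ x, φ (s * x - y) * Δi x) * (∫ x, φ (s * x - y) * Δj x)
      = s * ∫ y, ∫ p : ℝ × ℝ, F y p ∂((volume : Measure ℝ).prod volume) := by
        congr 1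
        refine integral_congr_ae (Filter.Eventually.of_forall fun y => ?_)
        exact (integral_prod_mul (fun x => φ (s * x - y) * Δi x)
          (fun x => φ (s * x - y) * Δj x)).symm
    _ = s * ∫ p : ℝ × ℝ, (∫ y, F y p) ∂((volume : Measure ℝ).prod volume) := by
        congr 1
        exact integral_integral_swap hFint
    _ = s * ∫ p : ℝ × ℝ, Δi p.1 * Δj p.2 * Rf (s * p.1 - s * p.2)
          ∂((volume : Measure ℝ).prod volume) := by
        congr 1
        exact integral_congr_ae (Filter.Eventually.of_forall fun p => stepC p)
    _ = s * ∫ x, ∫ z, Δi x * Δj z * Rf (s * x - s * z) := by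
        rw [integral_prod _ hint1]
    _ = ∫ x, s * ∫ z, Δi x * Δj z * Rf (s * x - s * z) := (integral_const_mul s _).symm
    _ = ∫ x, ∫ v, Δi x * Δj (x - v / s) * Rf v := by
        exact integral_congr_ae (Filter.Eventually.of_forall fun x => stepE x)
    _ = ∫ p : ℝ × ℝ, Δi p.1 * Δj (p.1 - p.2 / s) * Rf p.2
          ∂((volume : Measure ℝ).prod volume) := (integral_prod _ hint2).symm
    _ = ∫ p : ℝ × ℝ, Δi p.1 * Δj (p.1 - p.2 / s) * Rf p.2 := by
        rw [Measure.volume_eq_prod]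

private lemma key_tendsto (hφc : Continuous φ) {Δi Δj : ℝ → ℝ}
    (hic : Continuous Δi) (his : HasCompactSupport Δi)
    (hjc : Continuous Δj) (hjs : HasCompactSupport Δj)
    {M : ℝ} (hM0 : 0 ≤ M) (hMφ : ∀ x, M < |x| → φ x = 0) :
    Tendsto (fun n : ℕ => ∫ p : ℝ × ℝ,
        Δi p.1 * Δj (p.1 - p.2 / Real.sqrt n) * (∫ u, φ (p.2 + u) * φ u)) atTop
      (nhds ((∫ x, Δi x * Δj x) * ∫ v, ∫ u, φ (v + u) * φ u)) := by
  have hφs : HasCompactSupport φ := cpt_of_radius hMφ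
  set Rf := fun v : ℝ => ∫ u, φ (v + u) * φ u with hRfdef
  obtain ⟨Cφ, hCφ0, hCφ⟩ := bdd_of_cpt hφc hφs
  have hRc : Continuous Rf := R_cont hφc hφs hCφ
  have hRs : HasCompactSupport Rf := R_supp hM0 hMφ
  obtain ⟨Cj, hCj0, hCj⟩ := bdd_of_cpt hjc hjs
  have hlim : (∫ x, Δi x * Δj x) * ∫ v, Rf v
      = ∫ p : ℝ × ℝ, (fun q : ℝ × ℝ => Δi q.1 * Δj q.1 * Rf q.2) p := by
    rw [Measure.volume_eq_prod]
    exact (integral_prod_mul (fun x => Δi x * Δj x) Rf).symm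
  rw [hlim]
  apply tendsto_integral_of_dominated_convergence
    (bound := fun p : ℝ × ℝ => |Δi p.1| * (Cj * |Rf p.2|))
  · intro n
    apply Continuous.aestronglyMeasurable
    exact ((hic.comp continuous_fst).mul
      (hjc.comp (continuous_fst.sub (continuous_snd.div_const _)))).mul
      (hRc.comp continuous_snd)
  · rw [Measure.volume_eq_prod]
    exact Integrable.mul_prod (f := fun x => |Δi x|) (g := fun v => Cj * |Rf v|)
      (hic.abs.integrable_of_hasCompactSupport
        (his.comp_left (g := fun y : ℝ => |y|) abs_zero))
      ((hRc.abs.integrable_of_hasCompactSupport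
        (hRs.comp_left (g := fun y : ℝ => |y|) abs_zero)).const_mul Cj)
  · intro n
    filter_upwards with p
    rw [Real.norm_eq_abs, abs_mul, abs_mul, mul_assoc]
    refine mul_le_mul_of_nonneg_left ?_ (abs_nonneg _)
    exact mul_le_mul_of_nonneg_right (hCj _) (abs_nonneg _)
  · filter_upwards with p
    have hsq : Tendsto Real.sqrt atTop atTop := by
      apply tendsto_atTop_atTop.2
      intro b
      refine ⟨b ^ 2, fun a ha => ?_⟩
      rcases le_or_gt b 0 with hb | hb
      · exact hb.trans (Real.sqrt_nonneg a)
      · have h0a : (0:ℝ) ≤ a := le_trans (sq_nonneg b) ha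
        nlinarith [Real.sq_sqrt h0a, Real.sqrt_nonneg a]
    have hsqn : Tendsto (fun n : ℕ => Real.sqrt n) atTop atTop :=
      hsq.comp tendsto_natCast_atTop_atTop
    have h1 : Tendsto (fun n : ℕ => p.2 / Real.sqrt n) atTop (nhds 0) :=
      Tendsto.div_atTop tendsto_const_nhds hsqn
    have h2 : Tendsto (fun n : ℕ => p.1 - p.2 / Real.sqrt n) atTop (nhds p.1) := by
      have h2' : Tendsto (fun _ : ℕ => p.1) atTop (nhds p.1) := tendsto_const_nhds
      simpa using h2'.sub h1
    have h3 : Tendsto (fun n : ℕ => Δj (p.1 - p.2 / Real.sqrt n)) atTop (nhds (Δj p.1)) :=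
      (hjc.tendsto p.1).comp h2
    exact (tendsto_const_nhds.mul h3).mul tendsto_const_nhds

private lemma occ_step {B : ℝ → ℝ} {ℓ : ℝ → ℝ → ℝ}
    (hocc' : ∀ t' ∈ Set.Icc (0:ℝ) 1, ∀ g : ℝ → ℝ, Measurable g → (∃ K, ∀ x, |g x| ≤ K) →
      (∫ s in (0:ℝ)..t', g (B s)) = ∫ x, g x * ℓ t' x)
    (hℓint : ∀ t', Integrable (ℓ t'))
    {a b : ℝ} (ha : a ∈ Set.Icc (0:ℝ) 1) (hb : b ∈ Set.Icc (0:ℝ) 1) (hab : a ≤ b)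
    (g : ℝ → ℝ) (hg : Measurable g) {K : ℝ} (hK : ∀ x, |g x| ≤ K) :
    (∫ s in a..b, g (B s)) = ∫ x, g x * (ℓ b x - ℓ a x) := by
  have hK0 : 0 ≤ K := le_trans (abs_nonneg _) (hK 0)
  have h1mem : (1:ℝ) ∈ Set.Icc (0:ℝ) 1 := ⟨zero_le_one, le_refl 1⟩
  have hgl : ∀ t', Integrable (fun x => g x * ℓ t' x) := fun t' =>
    (hℓint t').bdd_mul (c := K) hg.aestronglyMeasurable (Filter.Eventually.of_forall fun x => by
      rw [Real.norm_eq_abs]; exact hK x)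
  have hl1 : (∫ x, ℓ 1 x) = 1 := by
    have := hocc' 1 h1mem (fun _ => 1) measurable_const ⟨1, fun x => by simp⟩
    simp only [intervalIntegral.integral_const, one_mul, smul_eq_mul, sub_zero, mul_one] at this
    exact this.symm
  -- a.e. strong measurability of s ↦ g (B s) on (0,1]
  have hmeas : AEStronglyMeasurable (fun s => g (B s)) (volume.restrict (Set.Ioc (0:ℝ) 1)) := by
    by_contra hm
    have hm2 : ¬ AEStronglyMeasurable (fun s => g (B s) + 1)
        (volume.restrict (Set.Ioc (0:ℝ) 1)) := by
      intro h
      apply hm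
      have h2 : AEStronglyMeasurable (fun s => (g (B s) + 1) - 1)
          (volume.restrict (Set.Ioc (0:ℝ) 1)) := h.sub aestronglyMeasurable_const
      simpa using h2
    have e1 := hocc' 1 h1mem g hg ⟨K, hK⟩
    have e2 := hocc' 1 h1mem (fun x => g x + 1) (hg.add_const 1)
      ⟨K + 1, fun x => (abs_add_le _ _).trans (by rw [abs_one]; exact add_le_add (hK x) le_rfl)⟩
    rw [intervalIntegral.integral_of_le zero_le_one] at e1 e2
    rw [integral_non_aestronglyMeasurable hm] at e1
    rw [integral_non_aestronglyMeasurable hm2] at e2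
    have e3 : ∫ x, (g x + 1) * ℓ 1 x = (∫ x, g x * ℓ 1 x) + ∫ x, ℓ 1 x := by
      rw [← integral_add (hgl 1) (hℓint 1)]
      refine integral_congr_ae (Filter.Eventually.of_forall fun x => ?_)
      ring
    rw [e3, ← e1, hl1] at e2
    norm_num at e2
  have hintOn : IntegrableOn (fun s => g (B s)) (Set.Ioc (0:ℝ) 1) volume := by
    apply Integrable.mono' (g := fun _ => K)
    · exact integrableOn_const (C := K) (hs := measure_Ioc_lt_top.ne)
    · exact hmeas
    · filter_upwards with s
      rw [Real.norm_eq_abs]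
      exact hK _
  have hi0a : IntervalIntegrable (fun s => g (B s)) volume 0 a :=
    (intervalIntegrable_iff_integrableOn_Ioc_of_le ha.1).2
      (hintOn.mono_set (Set.Ioc_subset_Ioc le_rfl ha.2))
  have hiab : IntervalIntegrable (fun s => g (B s)) volume a b :=
    (intervalIntegrable_iff_integrableOn_Ioc_of_le hab).2
      (hintOn.mono_set (Set.Ioc_subset_Ioc ha.1 hb.2))
  have hsplit := intervalIntegral.integral_add_adjacent_intervals hi0a hiab
  have ea := hocc' a ha g hg ⟨K, hK⟩
  have eb := hocc' b hb g hg ⟨K, hK⟩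
  have : (∫ s in a..b, g (B s)) = (∫ x, g x * ℓ b x) - ∫ x, g x * ℓ a x := by
    rw [← ea, ← eb]; linarith
  rw [this, ← integral_sub (hgl b) (hgl a)]
  refine integral_congr_ae (Filter.Eventually.of_forall fun x => ?_)
  ring

/-- Almost sure convergence of the conditional variance in dimension one:
`∫_ℝ F_n(y)² dy → R̂(0) Σ_{i,j} α_i α_j ∫ (L_{t_i} - L_{t_{i-1}})(L_{t_j} - L_{t_{j-1}}) dx`,
where `F_n(y) = Σ_i α_i n^{1/4} ∫_{t_{i-1}}^{t_i} φ(√n B_s - y) ds`, `L` is the (jointly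
continuous, compactly supported) local time of the Brownian motion `B` satisfying the
occupation time formula, and `R̂(0) = (∫ φ)²`. -/
theorem stmt9 {Ω : Type*} [MeasurableSpace Ω] (P : Measure Ω) [IsProbabilityMeasure P]
    (B : ℝ → Ω → ℝ) (hBmeas : ∀ s, Measurable (B s))
    (L : ℝ → ℝ → Ω → ℝ)
    (hLcont : ∀ ω t', Continuous fun x => L t' x ω)
    (hLsupp : ∀ ω t', HasCompactSupport fun x => L t' x ω)
    (hocc : ∀ ω, ∀ t' ∈ Set.Icc (0:ℝ) 1, ∀ g : ℝ → ℝ, Measurable g →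
      (∃ K, ∀ x, |g x| ≤ K) →
      (∫ s in (0:ℝ)..t', g (B s ω)) = ∫ x, g x * L t' x ω)
    (φ : ℝ → ℝ) (hφc : Continuous φ) (hφs : HasCompactSupport φ)
    (N : ℕ) (t : Fin (N + 1) → ℝ) (ht0 : t 0 = 0) (htm : StrictMono t)
    (htN : t (Fin.last N) ≤ 1) (α : Fin N → ℝ) :
    ∀ᵐ ω ∂P, Tendsto (fun n : ℕ =>
        ∫ y : ℝ, (∑ i : Fin N, α i * (n : ℝ) ^ ((1 : ℝ) / 4) *
          ∫ s in (t i.castSucc)..(t i.succ), φ (Real.sqrt n * B s ω - y)) ^ 2)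
      atTop
      (nhds ((∫ x, φ x) ^ 2 * ∑ i : Fin N, ∑ j : Fin N, α i * α j *
        ∫ x, (L (t i.succ) x ω - L (t i.castSucc) x ω)
            * (L (t j.succ) x ω - L (t j.castSucc) x ω))) := by
  refine MeasureTheory.ae_of_all P fun ω => ?_
  obtain ⟨Mφ, hMφ0, hMφ⟩ := radius_of_cpt hφs
  obtain ⟨Cφ, hCφ0, hCφ⟩ := bdd_of_cpt hφc hφs
  set Δ : Fin N → ℝ → ℝ := fun i x => L (t i.succ) x ω - L (t i.castSucc) x ω with hΔdef
  have hΔc : ∀ i, Continuous (Δ i) := fun i => (hLcont ω _).sub (hLcont ω _)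
  have hΔs : ∀ i, HasCompactSupport (Δ i) := fun i =>
    HasCompactSupport.comp₂_left (hLsupp ω _) (hLsupp ω _) (sub_zero 0)
  choose MΔ hMΔ0 hMΔr using fun i => radius_of_cpt (hΔs i)
  set M : ℝ := Mφ + ∑ i, |MΔ i| with hMdef
  have hM0 : 0 ≤ M := by positivity
  have hMφ' : ∀ x, M < |x| → φ x = 0 := by
    intro x hx
    apply hMφ
    have h1 : (0:ℝ) ≤ ∑ i, |MΔ i| := Finset.sum_nonneg fun i _ => abs_nonneg _
    linarith
  have hMΔ' : ∀ i x, M < |x| → Δ i x = 0 := by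
    intro i x hx
    apply hMΔr i
    have h1 : |MΔ i| ≤ ∑ j, |MΔ j| :=
      Finset.single_le_sum (fun j _ => abs_nonneg (MΔ j)) (Finset.mem_univ i)
    have h2 : MΔ i ≤ |MΔ i| := le_abs_self _
    linarith
  have htIcc : ∀ k, t k ∈ Set.Icc (0:ℝ) 1 := fun k =>
    ⟨by rw [← ht0]; exact htm.monotone (Fin.zero_le k),
      le_trans (htm.monotone (Fin.le_last k)) htN⟩
  have hℓint : ∀ t', Integrable (fun x => L t' x ω) := fun t' =>
    (hLcont ω t').integrable_of_hasCompactSupport (hLsupp ω t')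
  -- the key identity for n ≥ 1
  have hEq : ∀ n : ℕ, 1 ≤ n →
      (∫ y : ℝ, (∑ i : Fin N, α i * (n : ℝ) ^ ((1 : ℝ) / 4) *
          ∫ s in (t i.castSucc)..(t i.succ), φ (Real.sqrt n * B s ω - y)) ^ 2)
        = ∑ i : Fin N, ∑ j : Fin N, (α i * α j) *
            ∫ p : ℝ × ℝ, Δ i p.1 * Δ j (p.1 - p.2 / Real.sqrt n) *
              (∫ u, φ (p.2 + u) * φ u) := by
    intro n hn
    have hn0 : (0:ℝ) < (n:ℝ) := by exact_mod_cast hn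
    set s : ℝ := Real.sqrt n with hsdef
    have hs : 0 < s := Real.sqrt_pos.2 hn0
    set c : ℝ := (n : ℝ) ^ ((1 : ℝ) / 4) with hcdef
    have hc2 : c * c = s := by
      rw [hcdef, ← Real.rpow_add hn0, hsdef, Real.sqrt_eq_rpow]
      norm_num
    set Jf : Fin N → ℝ → ℝ := fun i y => ∫ x, φ (s * x - y) * Δ i x with hJdef
    have hstep1 : ∀ (i : Fin N) (y : ℝ),
        (∫ s' in (t i.castSucc)..(t i.succ), φ (s * B s' ω - y)) = Jf i y := by
      intro i y
      have hgm : Measurable fun x : ℝ => φ (s * x - y) :=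
        hφc.measurable.comp ((measurable_id.const_mul s).sub_const y)
      exact occ_step (B := fun u => B u ω) (ℓ := fun t' x => L t' x ω)
        (hocc ω) hℓint (htIcc i.castSucc) (htIcc i.succ)
        (htm.monotone (Fin.castSucc_lt_succ (i := i)).le) _ hgm (fun x => hCφ _)
    have hJc : ∀ i, Continuous (Jf i) := fun i => J_cont hφc (hΔc i) (hΔs i) hCφ s
    have hJs : ∀ i, HasCompactSupport (Jf i) := fun i => J_supp hM0 hs hMφ' (hMΔ' i)
    have hJint : ∀ i j, Integrable (fun y => Jf i y * Jf j y) := fun i j =>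
      ((hJc i).mul (hJc j)).integrable_of_hasCompactSupport (HasCompactSupport.mul_right (hJs i))
    have hfun : (fun y : ℝ => (∑ i : Fin N, α i * c *
          ∫ s' in (t i.castSucc)..(t i.succ), φ (s * B s' ω - y)) ^ 2)
        = fun y : ℝ => ∑ i : Fin N, ∑ j : Fin N,
            ((α i * α j) * (c * c)) * (Jf i y * Jf j y) := by
      funext y
      rw [show (∑ i : Fin N, α i * c *
            ∫ s' in (t i.castSucc)..(t i.succ), φ (s * B s' ω - y))
          = ∑ i : Fin N, α i * c * Jf i y from
        Finset.sum_congr rfl fun i _ => by rw [hstep1 i y]]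
      rw [sq, Finset.sum_mul_sum]
      exact Finset.sum_congr rfl fun i _ => Finset.sum_congr rfl fun j _ => by ring
    rw [hfun]
    rw [integral_finset_sum _ (fun i _ =>
      integrable_finset_sum _ (fun j _ => (hJint i j).const_mul _))]
    refine Finset.sum_congr rfl fun i _ => ?_
    rw [integral_finset_sum _ (fun j _ => (hJint i j).const_mul _)]
    refine Finset.sum_congr rfl fun j _ => ?_
    rw [integral_const_mul, hc2, mul_assoc,
      key_eq hφc (hΔc i) (hΔc j) hM0 hs hMφ' (hMΔ' i) (hMΔ' j)]
  -- convergence of the right-hand side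
  have hT : Tendsto (fun n : ℕ => ∑ i : Fin N, ∑ j : Fin N, (α i * α j) *
        ∫ p : ℝ × ℝ, Δ i p.1 * Δ j (p.1 - p.2 / Real.sqrt n) *
          (∫ u, φ (p.2 + u) * φ u)) atTop
      (nhds (∑ i : Fin N, ∑ j : Fin N, (α i * α j) *
        ((∫ x, Δ i x * Δ j x) * ∫ v, ∫ u, φ (v + u) * φ u))) := by
    refine tendsto_finset_sum _ fun i _ => tendsto_finset_sum _ fun j _ => ?_
    exact (key_tendsto hφc (hΔc i) (hΔs i) (hΔc j) (hΔs j) hM0 hMφ').const_mul _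
  have hval : (∑ i : Fin N, ∑ j : Fin N, (α i * α j) *
        ((∫ x, Δ i x * Δ j x) * ∫ v, ∫ u, φ (v + u) * φ u))
      = (∫ x, φ x) ^ 2 * ∑ i : Fin N, ∑ j : Fin N, α i * α j * ∫ x, Δ i x * Δ j x := by
    rw [R_integral hφc hφs hM0 hMφ', Finset.mul_sum]
    refine Finset.sum_congr rfl fun i _ => ?_
    rw [Finset.mul_sum]
    exact Finset.sum_congr rfl fun j _ => by ring
  rw [hval] at hT
  have hev : (fun n : ℕ => ∑ i : Fin N, ∑ j : Fin N, (α i * α j) *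
        ∫ p : ℝ × ℝ, Δ i p.1 * Δ j (p.1 - p.2 / Real.sqrt n) *
          (∫ u, φ (p.2 + u) * φ u))
      =ᶠ[atTop] (fun n : ℕ =>
        ∫ y : ℝ, (∑ i : Fin N, α i * (n : ℝ) ^ ((1 : ℝ) / 4) *
          ∫ s in (t i.castSucc)..(t i.succ), φ (Real.sqrt n * B s ω - y)) ^ 2) := by
    filter_upwards [eventually_ge_atTop 1] with n hn
    exact (hEq n hn).symm
  exact hT.congr' hev
end
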